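/- arXiv:1810.11905 — 3 statements merged into one kernel-verified Lean document; each statement's English description precedes it below -/
import Mathlib

section
/- Let σ(z) = 1/(1+e^{-z}) be the sigmoid function. For all real a and b, |σ(a) - σ(b)| ≥ e^{-|a|-3} · min(1, |a - b|). -/
/-!
Since `σ' = σ (1 - σ) = σ(|x|)² e^{-|x|}` and `σ(|x|) ≥ 1/2`, the slope of `σ` at `x` is at least
`e^{-|x|}/4`. On `[a - 1, a + 1]` this gives slopes `≥ e^{-|a|-1}/4 ≥ e^{-|a|-3}` (as `e² ≥ 4`),
which yields the bound for `|a - b| ≤ 1`; for `|a - b| > 1` monotonicity of `σ` reduces to the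
point at distance `1` from `a` towards `b`.
-/

open Real Set

namespace Real

lemma four_le_exp_two : 4 ≤ exp 2 := by
  have := quadratic_le_exp_of_nonneg (zero_le_two (α := ℝ))
  linarith

lemma exp_neg_abs_div_four_le_deriv_sigmoid (x : ℝ) : exp (-|x|) / 4 ≤ deriv sigmoid x := by
  have hsymm : deriv sigmoid x = sigmoid |x| * sigmoid (-|x|) := by
    rw [deriv_sigmoid]
    rcases abs_choice x with h | h
    · rw [h, sigmoid_neg]
    · rw [h, neg_neg, sigmoid_neg, mul_comm]
  have hhalf : 2⁻¹ ≤ sigmoid |x| := sigmoid_zero ▸ sigmoid_le (abs_nonneg x)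
  rw [hsymm, ← sigmoid_mul_rexp_neg]
  have hsq : 4⁻¹ ≤ sigmoid |x| * sigmoid |x| := by nlinarith
  nlinarith [mul_le_mul_of_nonneg_right hsq (exp_pos (-|x|)).le]

lemma exp_neg_abs_sub_div_four_mul_sub_le_sigmoid_sub (a r : ℝ) :
    ∀ᵉ (x ∈ Icc (a - r) (a + r)) (y ∈ Icc (a - r) (a + r)),
      x ≤ y → exp (-|a| - r) / 4 * (y - x) ≤ sigmoid y - sigmoid x := by
  refine (convex_Icc _ _).mul_sub_le_image_sub_of_le_deriv continuous_sigmoid.continuousOn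
    differentiable_sigmoid.differentiableOn fun z hz ↦ ?_
  rw [interior_Icc] at hz
  have hzr : |z| ≤ |a| + r := by
    have : |z - a| ≤ r := abs_sub_le_iff.mpr ⟨by linarith [hz.2], by linarith [hz.1]⟩
    linarith [abs_sub_abs_le_abs_sub z a]
  calc exp (-|a| - r) / 4 ≤ exp (-|z|) / 4 := by gcongr; linarith
    _ ≤ deriv sigmoid z := exp_neg_abs_div_four_le_deriv_sigmoid z

lemma exp_neg_abs_sub_one_div_four_mul_min_le_sigmoid_sub {a b : ℝ} (hab : a ≤ b) :
    exp (-|a| - 1) / 4 * min 1 (b - a) ≤ sigmoid b - sigmoid a := by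
  set c := a + min 1 (b - a)
  have hc : c ∈ Icc (a - 1) (a + 1) :=
    ⟨by linarith [le_min zero_le_one (sub_nonneg.2 hab)], by linarith [min_le_left 1 (b - a)]⟩
  have hcb : c ≤ b := by linarith [min_le_right 1 (b - a)]
  calc exp (-|a| - 1) / 4 * min 1 (b - a) = exp (-|a| - 1) / 4 * (c - a) := by ring
    _ ≤ sigmoid c - sigmoid a :=
      exp_neg_abs_sub_div_four_mul_sub_le_sigmoid_sub a 1 a (by constructor <;> linarith) c hc
        (by linarith [le_min zero_le_one (sub_nonneg.2 hab)])
    _ ≤ sigmoid b - sigmoid a := by linarith [sigmoid_le hcb]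

lemma exp_neg_abs_sub_one_div_four_mul_min_le_abs_sigmoid_sub (a b : ℝ) :
    exp (-|a| - 1) / 4 * min 1 |a - b| ≤ |sigmoid a - sigmoid b| := by
  rcases le_total a b with hab | hba
  · rw [abs_sub_comm, abs_of_nonneg (sub_nonneg.2 hab), abs_sub_comm,
      abs_of_nonneg (sub_nonneg.2 (sigmoid_le hab))]
    exact exp_neg_abs_sub_one_div_four_mul_min_le_sigmoid_sub hab
  · have h := exp_neg_abs_sub_one_div_four_mul_min_le_sigmoid_sub (neg_le_neg hba)
    rw [abs_neg, sigmoid_neg, sigmoid_neg, neg_sub_neg] at h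
    rw [abs_of_nonneg (sub_nonneg.2 hba), abs_of_nonneg (sub_nonneg.2 (sigmoid_le hba))]
    linarith

end Real

theorem stmt_2 (a b : ℝ) :
    |1 / (1 + Real.exp (-a)) - 1 / (1 + Real.exp (-b))| ≥
      Real.exp (-|a| - 3) * min 1 |a - b| := by
  simp only [one_div, ← sigmoid_def]
  have hconst : exp (-|a| - 3) ≤ exp (-|a| - 1) / 4 := by
    rw [le_div_iff₀ four_pos, show -|a| - 1 = (-|a| - 3) + 2 by ring, exp_add]
    gcongr
    exact four_le_exp_two
  calc exp (-|a| - 3) * min 1 |a - b|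
      ≤ exp (-|a| - 1) / 4 * min 1 |a - b| := by gcongr
    _ ≤ |sigmoid a - sigmoid b| := exp_neg_abs_sub_one_div_four_mul_min_le_abs_sigmoid_sub a b
end

section
/- Let D be a δ-unbiased distribution on {-1,1}^n. Suppose vectors u, w ∈ ℝ^n and scalars θ', θ'' satisfy E_{X∼D}[(σ(⟨w,X⟩+θ') − σ(⟨u,X⟩+θ''))²] ≤ ε with ε < δ·e^{-2‖w‖₁ − 2|θ'| − 6}. Then ‖w − u‖_∞ ≤ C·e^{‖w‖₁+|θ'|}·√(ε/δ) for some universal constant C. -/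
/-!
Flipping the `i`-th spin of `z` changes `(⟨w, z⟩ + θ') - (⟨u, z⟩ + θ'')` by `± 2 (w i - u i)`.
By δ-unbiasedness the flipped configuration carries at least δ times the mass, so the squared
sigmoid error averaged over `z` and over its flip is at most `2 ε / δ`, and some `z` has both
errors below `2 ε / δ`. Since `|⟨w, z⟩ + θ'| ≤ R := ‖w‖₁ + |θ'|`, the smallness of `ε` keeps
`⟨u, z⟩ + θ''` where `σ' = σ (1 - σ) ≳ e^{-R}`, so `σ` can be inverted there at a cost `O(e^R)`.
-/

open Real Finset Function

lemma exp_neg_abs_div_two_le_sigmoid (x : ℝ) : exp (-|x|) / 2 ≤ sigmoid x := by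
  calc exp (-|x|) / 2 = (2 * exp |x|)⁻¹ := by rw [exp_neg, mul_inv, mul_comm, div_eq_mul_inv]
    _ ≤ (1 + exp |x|)⁻¹ := inv_anti₀ (by positivity) (by linarith [one_le_exp (abs_nonneg x)])
    _ = sigmoid (-|x|) := by rw [sigmoid_def, neg_neg]
    _ ≤ sigmoid x := sigmoid_le (neg_abs_le x)

lemma half_min_le_sigmoid_mul_one_sub (x : ℝ) :
    min (sigmoid x) (1 - sigmoid x) / 2 ≤ sigmoid x * (1 - sigmoid x) := by
  have h0 := sigmoid_pos x
  have h1 := sigmoid_lt_one x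
  rcases le_total (sigmoid x) (1 / 2) with h | h
  · rw [min_eq_left (by linarith)]; nlinarith
  · rw [min_eq_right (by linarith)]; nlinarith

-- On `[a, b]` both `σ` and `1 - σ` stay above `m`, so `σ' = σ (1 - σ) ≥ m / 2` there.
lemma mul_sub_le_sigmoid_sub {a b m : ℝ} (hab : a ≤ b) (ha : m ≤ sigmoid a)
    (hb : m ≤ 1 - sigmoid b) : m / 2 * (b - a) ≤ sigmoid b - sigmoid a := by
  refine (convex_Icc a b).mul_sub_le_image_sub_of_le_deriv continuous_sigmoid.continuousOn
    differentiable_sigmoid.differentiableOn (fun c hc => ?_) a (Set.left_mem_Icc.2 hab) b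
    (Set.right_mem_Icc.2 hab) hab
  rw [interior_Icc] at hc
  have hm : m ≤ min (sigmoid c) (1 - sigmoid c) :=
    le_min (ha.trans (sigmoid_le hc.1.le)) (hb.trans (by linarith [sigmoid_le hc.2.le]))
  rw [deriv_sigmoid]
  linarith [half_min_le_sigmoid_mul_one_sub c]

lemma abs_sub_le_of_abs_sigmoid_sub_le {a b R η : ℝ} (ha : |a| ≤ R)
    (hη : η ≤ exp (-R) / 4) (hab : |sigmoid a - sigmoid b| ≤ η) :
    |a - b| ≤ 8 * exp R * η := by
  have hR : exp (-R) ≤ exp (-|a|) := exp_le_exp.2 (neg_le_neg ha)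
  have hσa : exp (-R) / 2 ≤ sigmoid a := by linarith [exp_neg_abs_div_two_le_sigmoid a]
  have hσa' : exp (-R) / 2 ≤ 1 - sigmoid a := by
    have := exp_neg_abs_div_two_le_sigmoid (-a)
    rw [abs_neg, sigmoid_neg] at this
    linarith
  obtain ⟨hab₁, hab₂⟩ := abs_le.1 hab
  have key : exp (-R) / 8 * |a - b| ≤ |sigmoid a - sigmoid b| := by
    rcases le_total a b with h | h
    · rw [abs_sub_comm, abs_of_nonneg (sub_nonneg.2 h), abs_sub_comm,
        abs_of_nonneg (sub_nonneg.2 (sigmoid_le h))]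
      convert mul_sub_le_sigmoid_sub (m := exp (-R) / 4) h (by linarith) (by linarith) using 2
      ring
    · rw [abs_of_nonneg (sub_nonneg.2 h), abs_of_nonneg (sub_nonneg.2 (sigmoid_le h))]
      convert mul_sub_le_sigmoid_sub (m := exp (-R) / 4) h (by linarith) (by linarith) using 2
      ring
  have hR8 : exp (-R) / 8 * (8 * exp R) = 1 := by
    rw [exp_neg]; field_simp
  calc |a - b| = exp (-R) / 8 * (8 * exp R) * |a - b| := by rw [hR8, one_mul]
    _ ≤ 8 * exp R * η := by nlinarith [exp_pos R]

section Unbiased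

variable {ι β : Type*} [Fintype ι] [DecidableEq ι] [Fintype β] [DecidableEq β]

-- `P(z i = b | z j = x j for j ≠ i) ≥ δ`, multiplied out so that null conditioning events
-- are allowed.
def IsUnbiased (δ : ℝ) (p : (ι → β) → ℝ) : Prop :=
  ∀ (i : ι) (b : β) (x : ι → β),
    δ * ∑ z ∈ univ.filter (fun z : ι → β => ∀ j, j ≠ i → z j = x j), p z ≤
      ∑ z ∈ univ.filter (fun z : ι → β => z i = b ∧ ∀ j, j ≠ i → z j = x j), p z

lemma filter_eq_and_forall_ne_eq_eq_singleton_update (i : ι) (b : β) (x : ι → β) :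
    univ.filter (fun z : ι → β => z i = b ∧ ∀ j, j ≠ i → z j = x j) = {update x i b} := by
  ext z
  simp only [mem_filter, mem_univ, true_and, mem_singleton, eq_update_iff]

lemma IsUnbiased.mul_le_update {δ : ℝ} {p : (ι → β) → ℝ} (h : IsUnbiased δ p)
    (hp : ∀ z, 0 ≤ p z) (hδ : 0 ≤ δ) (i : ι) (b : β) (x : ι → β) :
    δ * p x ≤ p (update x i b) := by
  have hx : p x ≤ ∑ z ∈ univ.filter (fun z : ι → β => ∀ j, j ≠ i → z j = x j), p z :=
    single_le_sum (fun z _ => hp z) (by simp)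
  calc δ * p x ≤ _ := mul_le_mul_of_nonneg_left hx hδ
    _ ≤ _ := h i b x
    _ = p (update x i b) := by rw [filter_eq_and_forall_ne_eq_eq_singleton_update, sum_singleton]

lemma IsUnbiased.le_one {δ : ℝ} {p : (ι → β) → ℝ} (h : IsUnbiased δ p)
    (hp : ∀ z, 0 ≤ p z) (hδ : 0 ≤ δ) (hsum : ∑ z, p z = 1) (i : ι) : δ ≤ 1 := by
  have hx : ∀ x, δ * p x ≤ p x := fun x => by
    simpa only [update_eq_self] using h.mul_le_update hp hδ i (x i) x
  calc δ = ∑ z, δ * p z := by rw [← mul_sum, hsum, mul_one]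
    _ ≤ ∑ z, p z := sum_le_sum fun z _ => hx z
    _ = 1 := hsum

end Unbiased

def flipAt {ι : Type*} [DecidableEq ι] (i : ι) (z : ι → Bool) : ι → Bool :=
  update z i (!z i)

lemma flipAt_involutive {ι : Type*} [DecidableEq ι] (i : ι) : Involutive (flipAt i) := by
  intro z
  simp [flipAt]

lemma mul_sum_mul_comp_perm_le {α : Type*} [Fintype α] {δ : ℝ} {p G : α → ℝ} (e : Equiv.Perm α)
    (hpe : ∀ z, δ * p z ≤ p (e z)) (hG : ∀ z, 0 ≤ G z) :
    δ * ∑ z, p z * G (e z) ≤ ∑ z, p z * G z := by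
  calc δ * ∑ z, p z * G (e z) = ∑ z, δ * p z * G (e z) := by
        rw [mul_sum]; simp only [mul_assoc]
    _ ≤ ∑ z, p (e z) * G (e z) := sum_le_sum fun z _ => mul_le_mul_of_nonneg_right (hpe z) (hG _)
    _ = ∑ z, p z * G z := Equiv.sum_comp e (fun z => p z * G z)

lemma exists_le_of_sum_mul_le {α : Type*} [Fintype α] {p G : α → ℝ} {M : ℝ}
    (hp : ∀ z, 0 ≤ p z) (hsum : ∑ z, p z = 1) (h : ∑ z, p z * G z ≤ M) : ∃ z, G z ≤ M := by
  by_contra! hlt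
  obtain ⟨z₀, -, hz₀⟩ := exists_ne_zero_of_sum_ne_zero (hsum.trans_ne one_ne_zero)
  have : ∑ z, p z * M < ∑ z, p z * G z :=
    sum_lt_sum (fun z _ => mul_le_mul_of_nonneg_left (hlt z).le (hp z))
      ⟨z₀, mem_univ _, mul_lt_mul_of_pos_left (hlt z₀) ((hp z₀).lt_of_ne' hz₀)⟩
  rw [← sum_mul, hsum, one_mul] at this
  linarith

lemma IsUnbiased.exists_add_comp_flipAt_le {ι : Type*} [Fintype ι] [DecidableEq ι] {δ ε : ℝ}
    {p G : (ι → Bool) → ℝ} (h : IsUnbiased δ p) (hp : ∀ z, 0 ≤ p z) (hsum : ∑ z, p z = 1)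
    (hδ : 0 < δ) (hG : ∀ z, 0 ≤ G z) (hε : ∑ z, p z * G z ≤ ε) (i : ι) :
    ∃ z, G z + G (flipAt i z) ≤ 2 * (ε / δ) := by
  have hflip : ∑ z, p z * G (flipAt i z) ≤ ε / δ :=
    (le_div_iff₀' hδ).2 <| (mul_sum_mul_comp_perm_le (flipAt_involutive i).toPerm
      (fun z => h.mul_le_update hp hδ.le i _ z) hG).trans hε
  have hεδ : ε ≤ ε / δ :=
    le_div_self ((sum_nonneg fun z _ => mul_nonneg (hp z) (hG z)).trans hε) hδ
      (h.le_one hp hδ.le hsum i)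
  refine exists_le_of_sum_mul_le hp hsum ?_
  simp only [mul_add, sum_add_distrib]
  linarith

def spin (b : Bool) : ℝ := if b then 1 else -1

lemma abs_spin (b : Bool) : |spin b| = 1 := by cases b <;> simp [spin]

def spinAffine {ι : Type*} [Fintype ι] (v : ι → ℝ) (θ : ℝ) (z : ι → Bool) : ℝ :=
  ∑ j, v j * spin (z j) + θ

lemma abs_spinAffine_le {ι : Type*} [Fintype ι] (v : ι → ℝ) (θ : ℝ) (z : ι → Bool) :
    |spinAffine v θ z| ≤ ∑ j, |v j| + |θ| := by
  unfold spinAffine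
  calc |∑ j, v j * spin (z j) + θ| ≤ ∑ j, |v j * spin (z j)| + |θ| :=
        (abs_add_le _ _).trans (add_le_add_left (abs_sum_le_sum_abs _ _) _)
    _ = ∑ j, |v j| + |θ| := by simp only [abs_mul, abs_spin, mul_one]

lemma spinAffine_sub_spinAffine_flipAt {ι : Type*} [Fintype ι] [DecidableEq ι] (v : ι → ℝ)
    (θ : ℝ) (z : ι → Bool) (i : ι) :
    spinAffine v θ z - spinAffine v θ (flipAt i z) = 2 * v i * spin (z i) := by
  simp only [spinAffine, flipAt, add_sub_add_right_eq_sub, ← sum_sub_distrib]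
  rw [sum_eq_single i (fun j _ hj => by rw [update_of_ne hj, sub_self]) (by simp),
    update_self]
  cases z i <;> simp [spin] <;> ring

lemma abs_sub_le_of_abs_spinAffine_sub_le {ι : Type*} [Fintype ι] [DecidableEq ι]
    {v w : ι → ℝ} {θ θ' K : ℝ} {z : ι → Bool} (i : ι)
    (h₁ : |spinAffine v θ z - spinAffine w θ' z| ≤ K)
    (h₂ : |spinAffine v θ (flipAt i z) - spinAffine w θ' (flipAt i z)| ≤ K) :
    |v i - w i| ≤ K := by
  have hdiff : 2 * (v i - w i) * spin (z i) =
      (spinAffine v θ z - spinAffine w θ' z) -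
        (spinAffine v θ (flipAt i z) - spinAffine w θ' (flipAt i z)) := by
    linear_combination (spinAffine_sub_spinAffine_flipAt v θ z i).symm +
      spinAffine_sub_spinAffine_flipAt w θ' z i
  have := (abs_sub _ _).trans (add_le_add h₁ h₂)
  rw [← hdiff, abs_mul, abs_mul, abs_spin, abs_two] at this
  linarith

lemma sqrt_two_mul_le_exp_neg_div_four {x R : ℝ} (hx : x < exp (-2 * R - 6)) :
    √(2 * x) ≤ exp (-R) / 4 := by
  have h64 : 64 ≤ exp 6 := by
    have h2 : 2 ≤ exp 1 := by linarith [add_one_le_exp 1]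
    calc (64 : ℝ) = 2 ^ 6 := by norm_num
      _ ≤ exp 1 ^ 6 := by gcongr
      _ = exp 6 := by rw [← exp_nat_mul]; norm_num
  have hsplit : exp (-2 * R - 6) * exp 6 = exp (-R) ^ 2 := by
    rw [← exp_add, sq, ← exp_add]; ring_nf
  rw [sqrt_le_iff]
  refine ⟨by positivity, ?_⟩
  nlinarith [exp_pos (-2 * R - 6)]

/-- If `D` is a δ-unbiased distribution on `{-1,1}^n` (spins encoded by `Bool` with value
`χ(b) = if b then 1 else -1`, δ-unbiasedness in multiplicative form) and
`E_{X∼D}[(σ(⟨w,X⟩+θ') − σ(⟨u,X⟩+θ''))²] ≤ ε` with `ε < δ·e^{-2‖w‖₁ − 2|θ'| − 6}`, then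
`‖w − u‖_∞ ≤ C·e^{‖w‖₁+|θ'|}·√(ε/δ)` for a universal constant `C`. -/
theorem stmt_14 :
    ∃ C : ℝ, 0 < C ∧
      ∀ (n : ℕ) (p : (Fin n → Bool) → ℝ) (δ ε θ' θ'' : ℝ) (w u : Fin n → ℝ),
        (∀ z, 0 ≤ p z) → (∑ z, p z = 1) → 0 < δ →
        (∀ (i : Fin n) (b : Bool) (x : Fin n → Bool),
          δ * ∑ z ∈ Finset.univ.filter (fun z : Fin n → Bool => ∀ j, j ≠ i → z j = x j), p z ≤
            ∑ z ∈ Finset.univ.filter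
              (fun z : Fin n → Bool => z i = b ∧ ∀ j, j ≠ i → z j = x j), p z) →
        (∑ z, p z *
            (1 / (1 + Real.exp (-((∑ j, w j * (if z j then (1 : ℝ) else -1)) + θ'))) -
             1 / (1 + Real.exp (-((∑ j, u j * (if z j then (1 : ℝ) else -1)) + θ'')))) ^ 2
          ≤ ε) →
        (ε < δ * Real.exp (-2 * (∑ j, |w j|) - 2 * |θ'| - 6)) →
        ∀ i : Fin n, |w i - u i| ≤
          C * Real.exp ((∑ j, |w j|) + |θ'|) * Real.sqrt (ε / δ) := by
  refine ⟨8 * √2, by positivity, ?_⟩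
  intro n p δ ε θ' θ'' w u hp hsum hδ hub hexp hε i
  -- only the decidability instances of the filters differ
  have hub : IsUnbiased δ p := fun i b x => by convert hub i b x
  set R := ∑ j, |w j| + |θ'| with hR
  set F : (Fin n → Bool) → ℝ := fun z =>
    (sigmoid (spinAffine w θ' z) - sigmoid (spinAffine u θ'' z)) ^ 2
  have hF : ∑ z, p z * F z ≤ ε := by
    simpa only [F, spinAffine, spin, sigmoid_def, one_div] using hexp
  have hF₀ : ∀ z, 0 ≤ F z := fun z => sq_nonneg _
  obtain ⟨z, hz⟩ := hub.exists_add_comp_flipAt_le hp hsum hδ hF₀ hF i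
  have hη : √(2 * (ε / δ)) ≤ exp (-R) / 4 := by
    refine sqrt_two_mul_le_exp_neg_div_four ((div_lt_iff₀' hδ).2 ?_)
    rwa [hR, show -2 * (∑ j, |w j| + |θ'|) - 6 = -2 * ∑ j, |w j| - 2 * |θ'| - 6 by ring]
  have hclose : ∀ z', F z' ≤ 2 * (ε / δ) →
      |spinAffine w θ' z' - spinAffine u θ'' z'| ≤ 8 * exp R * √(2 * (ε / δ)) := fun z' hz' =>
    abs_sub_le_of_abs_sigmoid_sub_le (abs_spinAffine_le w θ' z') hη
      ((sqrt_sq_eq_abs _).symm.trans_le (sqrt_le_sqrt hz'))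
  calc |w i - u i| ≤ 8 * exp R * √(2 * (ε / δ)) :=
        abs_sub_le_of_abs_spinAffine_sub_le i (hclose z (by linarith [hF₀ (flipAt i z)]))
          (hclose _ (by linarith [hF₀ z]))
    _ = 8 * √2 * exp R * √(ε / δ) := by rw [sqrt_mul zero_le_two]; ring
end

section
/- Let D be a δ-unbiased distribution on [k]^n and let X̃ ∈ {0,1}^{n×k} denote the one-hot encoding of X ∼ D. Let u, w ∈ ℝ^{n×k} have all rows centered (each row sums to 0). If E_X[(σ(⟨w,X̃⟩+θ') − σ(⟨u,X̃⟩+θ''))²] ≤ ε with ε < δ·e^{-2‖w‖_{∞,1} − 2|θ'| − 6}, then max_{i,a}|w(i,a) − u(i,a)| ≤ C·e^{‖w‖_{∞,1}+|θ'|}·√(ε/δ) for a universal constant C. -/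
open Real Finset

lemma exp3_ge : (20:ℝ) ≤ Real.exp 3 := by
  have h := Real.exp_one_gt_d9
  have h3 : Real.exp 3 = (Real.exp 1)^3 := by
    rw [← Real.exp_nat_mul]; norm_num
  rw [h3]
  calc (20:ℝ) ≤ (2.7182818283:ℝ)^3 := by norm_num
  _ ≤ (Real.exp 1)^3 := by
    apply pow_le_pow_left₀ (by norm_num) h.le

lemma chord_aux (r : ℝ) (hr : 0 ≤ r) :
    4 * Real.exp (-3) * min r (3/2) ≤ 1 - Real.exp (-r) := by
  have he3 : Real.exp (-3:ℝ) ≤ 1/20 := by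
    rw [Real.exp_neg]
    rw [inv_le_comm₀ (Real.exp_pos _) (by norm_num)]
    simpa using exp3_ge
  have he32 : Real.exp (-(3/2):ℝ) ≤ 2/5 := by
    rw [Real.exp_neg, inv_le_comm₀ (Real.exp_pos _) (by norm_num)]
    have := Real.add_one_le_exp (3/2:ℝ)
    linarith
  rcases le_or_gt (3/2:ℝ) r with h | h
  · rw [min_eq_right h]
    have : Real.exp (-r) ≤ Real.exp (-(3/2)) := Real.exp_le_exp.2 (by linarith)
    nlinarith
  · rw [min_eq_left h.le]
    have hc := convexOn_exp.2 (Set.mem_univ (-(3/2):ℝ)) (Set.mem_univ (0:ℝ))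
      (by positivity : (0:ℝ) ≤ 2*r/3) (by linarith : (0:ℝ) ≤ 1 - 2*r/3) (by ring)
    simp only [smul_eq_mul, mul_zero, add_zero, Real.exp_zero, mul_one] at hc
    have heq : 2*r/3 * (-(3/2)) = -r := by ring
    rw [heq] at hc
    nlinarith [Real.exp_pos (-(3/2):ℝ)]

lemma sig_lb (s t : ℝ) :
    Real.exp (-2*|s| - 6) * min ((s-t)^2) 2 ≤
      (1/(1+Real.exp (-s)) - 1/(1+Real.exp (-t)))^2 := by
  have hes := Real.exp_pos s
  have het := Real.exp_pos t
  have h1s : (0:ℝ) < 1 + Real.exp s := by linarith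
  have h1t : (0:ℝ) < 1 + Real.exp t := by linarith
  have hD : 1/(1+Real.exp (-s)) - 1/(1+Real.exp (-t))
      = (Real.exp s - Real.exp t)/((1+Real.exp s)*(1+Real.exp t)) := by
    rw [Real.exp_neg, Real.exp_neg]
    field_simp
    ring
  set r := |s - t| with hrdef
  have hr : 0 ≤ r := abs_nonneg _
  have hE1 : Real.exp (-r) ≤ 1 := Real.exp_le_one_iff.2 (by linarith)
  -- key: exp s * (1 - exp (-r)) / (1+exp s)^2 ≤ |D|
  have key : Real.exp s * (1 - Real.exp (-r)) / (1+Real.exp s)^2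
      ≤ |1/(1+Real.exp (-s)) - 1/(1+Real.exp (-t))| := by
    rw [hD, abs_div, abs_of_pos (mul_pos h1s h1t),
      div_le_div_iff₀ (by positivity) (by positivity)]
    rcases le_total t s with h | h
    · have hrr : r = s - t := abs_of_nonneg (by linarith)
      have hAE : Real.exp s * Real.exp (-r) = Real.exp t := by
        rw [← Real.exp_add, hrr]; ring_nf
      have hBA : Real.exp t ≤ Real.exp s := Real.exp_le_exp.2 h
      rw [abs_of_nonneg (by linarith : (0:ℝ) ≤ Real.exp s - Real.exp t)]
      have hsub : Real.exp s * (1 - Real.exp (-r)) = Real.exp s - Real.exp t := by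
        rw [mul_sub, hAE, mul_one]
      rw [hsub]
      nlinarith [mul_nonneg (sq_nonneg (Real.exp s - Real.exp t)) h1s.le]
    · have hrr : r = t - s := abs_of_nonpos (by linarith) |>.trans (by ring)
      have hBE : Real.exp t * Real.exp (-r) = Real.exp s := by
        rw [← Real.exp_add, hrr]; ring_nf
      have hAB : Real.exp s ≤ Real.exp t := Real.exp_le_exp.2 h
      rw [abs_of_nonpos (by linarith : Real.exp s - Real.exp t ≤ 0)]
      have hsub : 1 - Real.exp (-r) = (Real.exp t - Real.exp s)/Real.exp t := by
        rw [eq_div_iff het.ne', sub_mul, one_mul, mul_comm (Real.exp (-r)), hBE]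
      rw [hsub, mul_div_assoc', div_mul_eq_mul_div, div_le_iff₀ het]
      nlinarith [mul_nonneg (sq_nonneg (Real.exp t - Real.exp s)) h1s.le]
  -- exp(-|s|)/4 ≤ exp s / (1+exp s)^2
  have h4 : Real.exp (-|s|) * (1+Real.exp s)^2 ≤ 4 * Real.exp s := by
    rcases le_total 0 s with h | h
    · rw [abs_of_nonneg h, Real.exp_neg]
      have h1 : (1:ℝ) ≤ Real.exp s := Real.one_le_exp h
      rw [inv_mul_le_iff₀ hes]
      nlinarith
    · rw [abs_of_nonpos h, neg_neg]
      have h1 : Real.exp s ≤ 1 := Real.exp_le_one_iff.2 h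
      nlinarith [mul_nonneg (mul_nonneg hes.le (sub_nonneg.2 h1)) (by linarith : (0:ℝ) ≤ 3 + Real.exp s)]
  have hmid : Real.exp (-|s|)/4 * (1 - Real.exp (-r))
      ≤ Real.exp s * (1 - Real.exp (-r)) / (1+Real.exp s)^2 := by
    rw [div_mul_eq_mul_div, div_le_div_iff₀ (by norm_num) (by positivity)]
    have h1E : 0 ≤ 1 - Real.exp (-r) := by linarith
    calc Real.exp (-|s|) * (1 - Real.exp (-r)) * (1+Real.exp s)^2
        = (Real.exp (-|s|) * (1+Real.exp s)^2) * (1 - Real.exp (-r)) := by ring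
      _ ≤ (4 * Real.exp s) * (1 - Real.exp (-r)) := by
          exact mul_le_mul_of_nonneg_right h4 h1E
      _ = Real.exp s * (1 - Real.exp (-r)) * 4 := by ring
  -- chord bound with sqrt 2 cap
  have hs2 : Real.sqrt 2 ≤ 3/2 := by
    rw [show (3/2:ℝ) = Real.sqrt ((3/2)^2) from (Real.sqrt_sq (by norm_num)).symm]
    exact Real.sqrt_le_sqrt (by norm_num)
  have hchord : 4 * Real.exp (-3) * min r (Real.sqrt 2) ≤ 1 - Real.exp (-r) := by
    have h1 := chord_aux r hr
    have h2 : min r (Real.sqrt 2) ≤ min r (3/2) := min_le_min le_rfl hs2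
    nlinarith [Real.exp_pos (-3:ℝ)]
  have hminnn : 0 ≤ min r (Real.sqrt 2) := le_min hr (Real.sqrt_nonneg 2)
  have hsq : min ((s-t)^2) 2 = (min r (Real.sqrt 2))^2 := by
    rw [← sq_abs (s-t), ← hrdef]
    rcases le_total r (Real.sqrt 2) with h | h
    · rw [min_eq_left h, min_eq_left]
      nlinarith [Real.sq_sqrt (by norm_num : (0:ℝ) ≤ 2), Real.sqrt_nonneg 2]
    · rw [min_eq_right h, min_eq_right (by nlinarith [Real.sq_sqrt (by norm_num : (0:ℝ) ≤ 2), Real.sqrt_nonneg 2]), Real.sq_sqrt (by norm_num : (0:ℝ) ≤ 2)]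
  -- put together
  have ha : 0 ≤ Real.exp (-|s|)/4 * (1 - Real.exp (-r)) :=
    mul_nonneg (by positivity) (by linarith)
  have habs : Real.exp (-|s|)/4 * (1 - Real.exp (-r))
      ≤ |1/(1+Real.exp (-s)) - 1/(1+Real.exp (-t))| := le_trans hmid key
  have hsq2 : (Real.exp (-|s|)/4 * (1 - Real.exp (-r)))^2
      ≤ (1/(1+Real.exp (-s)) - 1/(1+Real.exp (-t)))^2 := by
    rw [← sq_abs (1/(1+Real.exp (-s)) - 1/(1+Real.exp (-t)))]
    exact pow_le_pow_left₀ ha habs 2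
  refine le_trans ?_ hsq2
  rw [hsq]
  have hexp : Real.exp (-2*|s| - 6) = (Real.exp (-|s|)/4)^2 * (4*Real.exp (-3))^2 := by
    have h : Real.exp (-2*|s| - 6)
        = Real.exp (-|s|) * Real.exp (-|s|) * (Real.exp (-3) * Real.exp (-3)) := by
      rw [← Real.exp_add, ← Real.exp_add, ← Real.exp_add]; ring_nf
    rw [h]; ring
  rw [hexp]
  calc (Real.exp (-|s|)/4)^2 * (4*Real.exp (-3))^2 * (min r (Real.sqrt 2))^2
      = (Real.exp (-|s|)/4)^2 * (4*Real.exp (-3) * min r (Real.sqrt 2))^2 := by ring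
    _ ≤ (Real.exp (-|s|)/4)^2 * (1 - Real.exp (-r))^2 := by
        have h2 := pow_le_pow_left₀ (by positivity : (0:ℝ) ≤ 4 * Real.exp (-3) * min r (Real.sqrt 2)) hchord 2
        exact mul_le_mul_of_nonneg_left h2 (by positivity)
    _ = (Real.exp (-|s|)/4 * (1 - Real.exp (-r)))^2 := by ring

lemma min_comb (x y : ℝ) : min ((x-y)^2/2) 2 ≤ min (x^2) 2 + min (y^2) 2 := by
  rcases le_total (x^2) 2 with hx | hx
  · rcases le_total (y^2) 2 with hy | hy
    · rw [min_eq_left hx, min_eq_left hy]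
      calc min ((x-y)^2/2) 2 ≤ (x-y)^2/2 := min_le_left _ _
        _ ≤ x^2 + y^2 := by nlinarith [sq_nonneg (x+y)]
    · rw [min_eq_right hy]
      have := min_le_right ((x-y)^2/2) 2
      nlinarith [sq_nonneg x, min_le_right (x^2) 2, le_min (sq_nonneg x) (by norm_num : (0:ℝ) ≤ 2)]
  · rw [min_eq_right hx]
    nlinarith [min_le_right ((x-y)^2/2) 2, le_min (sq_nonneg y) (by norm_num : (0:ℝ) ≤ 2)]

lemma transfer {n k : ℕ} (p : (Fin n → Fin (k + 1)) → ℝ) (δ : ℝ)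
    (hp : ∀ z, 0 ≤ p z) (i : Fin n) (a : Fin (k + 1))
    (hub : ∀ (x : Fin n → Fin (k + 1)),
      δ * ∑ z ∈ Finset.univ.filter
          (fun z : Fin n → Fin (k + 1) => ∀ j, j ≠ i → z j = x j), p z ≤
        ∑ z ∈ Finset.univ.filter
          (fun z : Fin n → Fin (k + 1) => z i = a ∧ ∀ j, j ≠ i → z j = x j), p z)
    (m : (Fin n → Fin (k + 1)) → ℝ) (hm : ∀ z, 0 ≤ m z) :
    δ * ∑ z, p z * m (Function.update z i a) ≤ ∑ z, p z * m z := by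
  have key : ∑ z, p z * m (Function.update z i a)
      = ∑ y, (∑ z ∈ Finset.univ.filter
          (fun z : Fin n → Fin (k+1) => Function.update z i a = y), p z) * m y := by
    rw [← Finset.sum_fiberwise Finset.univ (fun z => Function.update z i a)
      (fun z => p z * m (Function.update z i a))]
    refine Finset.sum_congr rfl fun y _ => ?_
    rw [Finset.sum_mul]
    refine Finset.sum_congr rfl fun z hz => ?_
    rw [Finset.mem_filter] at hz
    rw [hz.2]
  rw [key, Finset.mul_sum]
  refine Finset.sum_le_sum fun y _ => ?_
  by_cases hy : y i = a
  · have hfib : Finset.univ.filter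
        (fun z : Fin n → Fin (k+1) => Function.update z i a = y) =
        Finset.univ.filter (fun z : Fin n → Fin (k+1) => ∀ j, j ≠ i → z j = y j) := by
      ext z
      simp only [Finset.mem_filter, Finset.mem_univ, true_and]
      constructor
      · intro h j hj
        rw [← h]
        simp [Function.update_apply, hj]
      · intro h
        funext j
        by_cases hj : j = i
        · subst hj; simp [hy]
        · simp [Function.update_apply, hj, h j hj]
    have hsingle : ∑ z ∈ Finset.univ.filter
        (fun z : Fin n → Fin (k+1) => z i = a ∧ ∀ j, j ≠ i → z j = y j), p z = p y := by
      have : Finset.univ.filter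
          (fun z : Fin n → Fin (k+1) => z i = a ∧ ∀ j, j ≠ i → z j = y j) = {y} := by
        ext z
        simp only [Finset.mem_filter, Finset.mem_univ, true_and, Finset.mem_singleton]
        constructor
        · rintro ⟨h1, h2⟩
          funext j
          by_cases hj : j = i
          · subst hj; rw [h1, hy]
          · exact h2 j hj
        · rintro rfl
          exact ⟨hy, fun j _ => rfl⟩
      rw [this, Finset.sum_singleton]
    rw [← mul_assoc]
    calc δ * (∑ z ∈ Finset.univ.filter
          (fun z : Fin n → Fin (k+1) => Function.update z i a = y), p z) * m y
        ≤ p y * m y := by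
          apply mul_le_mul_of_nonneg_right _ (hm y)
          rw [hfib, ← hsingle]
          exact hub y
      _ = p y * m y := rfl
  · have hfib : Finset.univ.filter
        (fun z : Fin n → Fin (k+1) => Function.update z i a = y) = ∅ := by
      ext z
      simp only [Finset.mem_filter, Finset.mem_univ, true_and, Finset.notMem_empty,
        iff_false]
      intro h
      apply hy
      rw [← h]
      simp
    rw [hfib]
    simp
    exact mul_nonneg (hp y) (hm y)


/-- Group version: if `D` is a δ-unbiased distribution on `[k]^n` (multiplicative form),
`u, w ∈ ℝ^{n×k}` have centered rows, and, writing `⟨w, X̃⟩ = Σ_i w(i, X_i)` for the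
one-hot encoding `X̃` of `X`, `E_X[(σ(⟨w,X̃⟩+θ') − σ(⟨u,X̃⟩+θ''))²] ≤ ε` with
`ε < δ·e^{-2‖w‖_{∞,1} − 2|θ'| − 6}` (`‖w‖_{∞,1} = Σ_i max_a |w(i,a)|`), then
`max_{i,a} |w(i,a) − u(i,a)| ≤ C·e^{‖w‖_{∞,1}+|θ'|}·√(ε/δ)` for a universal constant `C`.
The alphabet is `Fin (k+1)`. -/
theorem stmt_15 :
    ∃ C : ℝ, 0 < C ∧
      ∀ (n k : ℕ) (p : (Fin n → Fin (k + 1)) → ℝ) (δ ε θ' θ'' : ℝ)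
        (w u : Fin n → Fin (k + 1) → ℝ),
        (∀ z, 0 ≤ p z) → (∑ z, p z = 1) → 0 < δ →
        (∀ (i : Fin n) (a : Fin (k + 1)) (x : Fin n → Fin (k + 1)),
          δ * ∑ z ∈ Finset.univ.filter
              (fun z : Fin n → Fin (k + 1) => ∀ j, j ≠ i → z j = x j), p z ≤
            ∑ z ∈ Finset.univ.filter
              (fun z : Fin n → Fin (k + 1) => z i = a ∧ ∀ j, j ≠ i → z j = x j), p z) →
        (∀ i : Fin n, ∑ a, w i a = 0) → (∀ i : Fin n, ∑ a, u i a = 0) →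
        (∑ z, p z *
            (1 / (1 + Real.exp (-((∑ i, w i (z i)) + θ'))) -
             1 / (1 + Real.exp (-((∑ i, u i (z i)) + θ'')))) ^ 2 ≤ ε) →
        (ε < δ * Real.exp
            (-2 * (∑ i, Finset.univ.sup' Finset.univ_nonempty (fun a => |w i a|)) -
              2 * |θ'| - 6)) →
        ∀ (i : Fin n) (a : Fin (k + 1)), |w i a - u i a| ≤
          C * Real.exp ((∑ i, Finset.univ.sup' Finset.univ_nonempty (fun a => |w i a|)) +
            |θ'|) * Real.sqrt (ε / δ) := by
  refine ⟨2 * Real.exp 3, by positivity, ?_⟩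
  intro n k p δ ε θ' θ'' w u hp hsum hδ hub hw hu hexp hlt i a
  set W := ∑ i, Finset.univ.sup' Finset.univ_nonempty (fun a => |w i a|) with hW
  set K := 2*W + 2*|θ'| + 6 with hK
  set f : (Fin n → Fin (k+1)) → ℝ := fun z => (∑ i, w i (z i)) + θ' with hf
  set g : (Fin n → Fin (k+1)) → ℝ := fun z => (∑ i, u i (z i)) + θ'' with hg
  set m : (Fin n → Fin (k+1)) → ℝ := fun z => min ((f z - g z)^2) 2 with hm
  have hm0 : ∀ z, 0 ≤ m z := fun z => le_min (sq_nonneg _) (by norm_num)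
  have hε0 : 0 ≤ ε :=
    le_trans (Finset.sum_nonneg fun z _ => mul_nonneg (hp z) (sq_nonneg _)) hexp
  have hεδ : 0 ≤ ε / δ := div_nonneg hε0 hδ.le
  have hfb : ∀ z, |f z| ≤ W + |θ'| := by
    intro z
    refine (abs_add_le _ _).trans ?_
    refine add_le_add ((Finset.abs_sum_le_sum_abs _ _).trans ?_) le_rfl
    exact Finset.sum_le_sum fun j _ =>
      Finset.le_sup' (fun a => |w j a|) (Finset.mem_univ (z j))
  have h1 : ∀ z, Real.exp (-K) * m z ≤
      (1 / (1 + Real.exp (-(f z))) - 1 / (1 + Real.exp (-(g z))))^2 := by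
    intro z
    refine le_trans ?_ (sig_lb (f z) (g z))
    apply mul_le_mul_of_nonneg_right _ (hm0 z) |>.trans_eq rfl
    exact Real.exp_le_exp.2 (by have := hfb z; rw [hK]; linarith)
  have h2 : ∑ z, p z * m z ≤ ε * Real.exp K := by
    have hmain : Real.exp (-K) * ∑ z, p z * m z ≤ ε := by
      calc Real.exp (-K) * ∑ z, p z * m z
          = ∑ z, p z * (Real.exp (-K) * m z) := by
            rw [Finset.mul_sum]; exact Finset.sum_congr rfl fun z _ => by ring
        _ ≤ ∑ z, p z *
            (1 / (1 + Real.exp (-(f z))) - 1 / (1 + Real.exp (-(g z))))^2 :=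
            Finset.sum_le_sum fun z _ => mul_le_mul_of_nonneg_left (h1 z) (hp z)
        _ ≤ ε := hexp
    have := mul_le_mul_of_nonneg_left hmain (Real.exp_pos K).le
    rw [← mul_assoc, ← Real.exp_add] at this
    simp at this
    linarith
  have hklt : ε * Real.exp K < δ := by
    have h3 : ε < δ * Real.exp (-K) := by
      convert hlt using 3
      rw [hK]; ring
    have := mul_lt_mul_of_pos_right h3 (Real.exp_pos K)
    rw [mul_assoc, ← Real.exp_add] at this
    simp at this
    linarith
  -- bound on pairwise differences
  have hvb : ∀ b : Fin (k+1),
      ((w i a - u i a) - (w i b - u i b))^2 ≤ 4 * (ε * Real.exp K) / δ := by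
    intro b
    set q := ((w i a - u i a) - (w i b - u i b))^2 with hq
    have hkey : ∀ (v : Fin n → Fin (k+1) → ℝ) (z : Fin n → Fin (k+1)) (c d : Fin (k+1)),
        (∑ j, v j (Function.update z i c j)) - (∑ j, v j (Function.update z i d j))
          = v i c - v i d := by
      intro v z c d
      rw [← Finset.sum_sub_distrib]
      rw [Finset.sum_eq_single i]
      · simp
      · intro j _ hj
        rw [Function.update_of_ne hj, Function.update_of_ne hj, sub_self]
      · intro h; exact absurd (Finset.mem_univ i) h
    have hdiff : ∀ z : Fin n → Fin (k+1),
        (f (Function.update z i a) - g (Function.update z i a)) -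
        (f (Function.update z i b) - g (Function.update z i b))
          = (w i a - u i a) - (w i b - u i b) := by
      intro z
      have h1 := hkey w z a b
      have h2 := hkey u z a b
      simp only [hf, hg]
      linarith
    have hpt : ∀ z, min (q/2) 2 ≤
        m (Function.update z i a) + m (Function.update z i b) := by
      intro z
      have hmc := min_comb (f (Function.update z i a) - g (Function.update z i a))
        (f (Function.update z i b) - g (Function.update z i b))
      rw [hdiff z] at hmc
      exact hmc
    have hA := transfer p δ hp i a (hub i a) m hm0
    have hB := transfer p δ hp i b (hub i b) m hm0
    have hs1 : δ * min (q/2) 2 ≤ 2 * (ε * Real.exp K) := by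
      have e1 : min (q/2) 2 = ∑ z, p z * min (q/2) 2 := by
        rw [← Finset.sum_mul, hsum, one_mul]
      calc δ * min (q/2) 2 = δ * ∑ z, p z * min (q/2) 2 := by rw [← e1]
        _ ≤ δ * ∑ z, p z * (m (Function.update z i a) + m (Function.update z i b)) := by
            refine mul_le_mul_of_nonneg_left (Finset.sum_le_sum fun z _ =>
              mul_le_mul_of_nonneg_left (hpt z) (hp z)) hδ.le
        _ = δ * (∑ z, p z * m (Function.update z i a)) +
            δ * (∑ z, p z * m (Function.update z i b)) := by
            simp only [mul_add, Finset.sum_add_distrib]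
        _ ≤ (∑ z, p z * m z) + (∑ z, p z * m z) := add_le_add hA hB
        _ ≤ 2 * (ε * Real.exp K) := by linarith
    have hmin2 : min (q/2) 2 < 2 := by
      have : δ * min (q/2) 2 < δ * 2 := lt_of_le_of_lt hs1 (by linarith)
      exact lt_of_mul_lt_mul_left this hδ.le
    have hq2 : q/2 ≤ 2 := by
      by_contra h
      push_neg at h
      rw [min_eq_right h.le] at hmin2
      exact lt_irrefl _ hmin2
    rw [min_eq_left hq2] at hs1
    rw [le_div_iff₀ hδ]
    linarith
  set B := 2 * Real.exp 3 * Real.exp (W + |θ'|) * Real.sqrt (ε / δ) with hB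
  have hB0 : 0 ≤ B := by positivity
  have hBsq : 4 * (ε * Real.exp K) / δ = B^2 := by
    have e1 : Real.exp 3 * Real.exp 3 * (Real.exp (W+|θ'|) * Real.exp (W+|θ'|))
        = Real.exp K := by
      rw [← Real.exp_add, ← Real.exp_add, ← Real.exp_add]
      congr 1
      rw [hK]; ring
    have e2 : B^2 = 4 * (Real.exp 3 * Real.exp 3 *
        (Real.exp (W+|θ'|) * Real.exp (W+|θ'|))) * (Real.sqrt (ε/δ))^2 := by
      rw [hB]; ring
    rw [e2, Real.sq_sqrt hεδ, e1]
    field_simp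
  have hvabs : ∀ b : Fin (k+1), |(w i a - u i a) - (w i b - u i b)| ≤ B := by
    intro b
    have hsq : ((w i a - u i a) - (w i b - u i b))^2 ≤ B^2 := by
      rw [← hBsq]; exact hvb b
    calc |(w i a - u i a) - (w i b - u i b)|
        = Real.sqrt (((w i a - u i a) - (w i b - u i b))^2) :=
          (Real.sqrt_sq_eq_abs _).symm
      _ ≤ Real.sqrt (B^2) := Real.sqrt_le_sqrt hsq
      _ = B := Real.sqrt_sq hB0
  have hsumv : ∑ b, (w i b - u i b) = 0 := by
    rw [Finset.sum_sub_distrib, hw i, hu i, sub_zero]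
  have hcard : ((k:ℝ)+1) * (w i a - u i a)
      = ∑ b, ((w i a - u i a) - (w i b - u i b)) := by
    rw [Finset.sum_sub_distrib, hsumv, sub_zero, Finset.sum_const, Finset.card_univ,
      Fintype.card_fin, nsmul_eq_mul]
    push_cast
    ring
  have hfinal : ((k:ℝ)+1) * |w i a - u i a| ≤ ((k:ℝ)+1) * B := by
    calc ((k:ℝ)+1) * |w i a - u i a| = |((k:ℝ)+1) * (w i a - u i a)| := by
          rw [abs_mul, abs_of_nonneg (by positivity : (0:ℝ) ≤ (k:ℝ)+1)]
      _ = |∑ b, ((w i a - u i a) - (w i b - u i b))| := by rw [hcard]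
      _ ≤ ∑ b, |(w i a - u i a) - (w i b - u i b)| := Finset.abs_sum_le_sum_abs _ _
      _ ≤ ∑ _b : Fin (k+1), B := Finset.sum_le_sum fun b _ => hvabs b
      _ = ((k:ℝ)+1) * B := by
          rw [Finset.sum_const, Finset.card_univ, Fintype.card_fin, nsmul_eq_mul]
          push_cast
          ring
  exact le_of_mul_le_mul_left hfinal (by positivity : (0:ℝ) < (k:ℝ)+1)
end
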